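/- arXiv:2006.05592 — 3 statements merged into one kernel-verified Lean document; each statement's English description precedes it below -/
import Mathlib

section
/- Let a ∈ {0,1}^n be a vector with at most c nonzero entries. Then there exists x ∈ ℝ^{2c+1} such that for every t ∈ {1,...,n}, the sign of Σ_{j=1}^{2c+1} x_j · t^{j−1} is positive if a_t = 1 and negative if a_t = 0. -/
open Polynomial Finset

lemma one_div_four_lt_sq_sub_of_ne {m s : ℤ} (h : m ≠ s) : 1 / 4 < ((m : ℝ) - s) ^ 2 := by
  have hsq : (1 : ℤ) ≤ (m - s) ^ 2 :=
    (one_le_sq_iff_one_le_abs _).2 (Int.one_le_abs (sub_ne_zero.2 h))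
  have : (1 : ℝ) ≤ ((m : ℝ) - s) ^ 2 := by exact_mod_cast hsq
  linarith

/-- The roots `s ± 1/2` of each factor isolate `s` among the integers, so on `ℤ` this polynomial
is positive exactly on `S`. -/
noncomputable def indicatorSignPoly (S : Finset ℤ) : ℝ[X] :=
  -∏ s ∈ S, ((X - C (s : ℝ)) ^ 2 - C (1 / 4))

lemma natDegree_indicatorSignPoly_le (S : Finset ℤ) :
    (indicatorSignPoly S).natDegree ≤ 2 * S.card := by
  rw [indicatorSignPoly, natDegree_neg]
  refine (natDegree_prod_le _ _).trans ?_
  rw [mul_comm, ← smul_eq_mul, ← sum_const]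
  refine sum_le_sum fun s _ => ?_
  rw [natDegree_sub_C, natDegree_pow, natDegree_X_sub_C]

lemma eval_indicatorSignPoly (S : Finset ℤ) (x : ℝ) :
    (indicatorSignPoly S).eval x = -∏ s ∈ S, ((x - s) ^ 2 - 1 / 4) := by
  simp only [indicatorSignPoly, eval_neg, eval_prod, eval_sub, eval_pow, eval_X, eval_C]

lemma prod_sq_sub_pos_of_notMem {S : Finset ℤ} {m : ℤ} (hm : m ∉ S) :
    0 < ∏ s ∈ S, (((m : ℝ) - s) ^ 2 - 1 / 4) :=
  prod_pos fun _ hs => sub_pos.2 (one_div_four_lt_sq_sub_of_ne (ne_of_mem_of_not_mem hs hm).symm)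

lemma indicatorSignPoly_eval_neg_of_notMem {S : Finset ℤ} {m : ℤ} (hm : m ∉ S) :
    (indicatorSignPoly S).eval (m : ℝ) < 0 := by
  rw [eval_indicatorSignPoly, neg_neg_iff_pos]
  exact prod_sq_sub_pos_of_notMem hm

lemma indicatorSignPoly_eval_pos_of_mem {S : Finset ℤ} {m : ℤ} (hm : m ∈ S) :
    0 < (indicatorSignPoly S).eval (m : ℝ) := by
  rw [eval_indicatorSignPoly, ← mul_prod_erase S _ hm, neg_pos, sub_self]
  exact mul_neg_of_neg_of_pos (by norm_num) (prod_sq_sub_pos_of_notMem (notMem_erase m S))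

lemma sum_fin_coeff_mul_pow_eq_eval {R : Type*} [CommSemiring R] {p : R[X]} {m : ℕ}
    (hp : p.natDegree < m) (x : R) : ∑ j : Fin m, p.coeff j * x ^ (j : ℕ) = p.eval x := by
  rw [eval_eq_sum_range' hp, Fin.sum_univ_eq_sum_range (fun j => p.coeff j * x ^ j)]

theorem exists_sign_pattern_vector (n c : ℕ) (a : Fin n → Bool)
    (hsparse : (Finset.univ.filter (fun t => a t = true)).card ≤ c) :
    ∃ x : Fin (2 * c + 1) → ℝ, ∀ t : Fin n,
      (a t = true → 0 < ∑ j : Fin (2 * c + 1), x j * ((t.val + 1 : ℝ)) ^ (j : ℕ)) ∧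
      (a t = false → ∑ j : Fin (2 * c + 1), x j * ((t.val + 1 : ℝ)) ^ (j : ℕ) < 0) := by
  set pos : Fin n → ℤ := fun t => t.val + 1
  have hpos : pos.Injective := fun s t h => Fin.ext (by simpa [pos] using h)
  set S := (univ.filter (fun t => a t = true)).image pos
  have hdeg : (indicatorSignPoly S).natDegree < 2 * c + 1 :=
    (natDegree_indicatorSignPoly_le S).trans_lt
      (Nat.lt_succ_of_le (Nat.mul_le_mul_left 2 (card_image_le.trans hsparse)))
  refine ⟨fun j => (indicatorSignPoly S).coeff j, fun t => ?_⟩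
  have hmem : pos t ∈ S ↔ a t = true := by simp [S, hpos.eq_iff]
  have hcast : (pos t : ℝ) = t.val + 1 := by simp [pos]
  rw [sum_fin_coeff_mul_pow_eq_eval hdeg, ← hcast]
  exact ⟨fun ht => indicatorSignPoly_eval_pos_of_mem (hmem.2 ht),
    fun ht => indicatorSignPoly_eval_neg_of_notMem (by simp [hmem, ht])⟩
end

section
/- Let G be a graph on n vertices with maximum degree at most c. Then the sign-rank of its adjacency matrix is at most 2c + 1; that is, there exists a real matrix M of rank at most 2c+1 with no zero entries such that M_{ij} > 0 if and only if (i,j) is an edge of G (and M_{ij} < 0 otherwise). -/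
/-!
Give vertex `u` the real coordinate `u` and attach to vertex `i` the polynomial
`p_i(x) = -∏_{u ∼ i} ((x - u)² - 1/2)` of degree at most `2c`. At an integer point `j` every
factor is at least `1/2` except the one with `u = j`, which equals `-1/2`, so `p_i(j) > 0`
exactly when `j ∼ i`. The matrix `(p_i(j))` is the coefficient matrix of the `p_i` times the
`(2c+1) × n` Vandermonde matrix `(j^k)`, hence has rank at most `2c + 1`.
-/

open Polynomial

theorem Matrix.rank_of_eval_le {R ι κ : Type*} [CommRing R] [StrongRankCondition R]
    [Fintype κ] (p : ι → R[X]) (x : κ → R) {d : ℕ} (hp : ∀ i, (p i).natDegree < d) :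
    (Matrix.of fun i j => (p i).eval (x j)).rank ≤ d := by
  have hfactor : (Matrix.of fun i j => (p i).eval (x j)) =
      (Matrix.of fun i (k : Fin d) => (p i).coeff k) *
        Matrix.of fun (k : Fin d) j => x j ^ (k : ℕ) := by
    ext i j
    simp [Matrix.mul_apply, eval_eq_sum_range' (hp i), Finset.sum_range]
  calc _ ≤ (Matrix.of fun i (k : Fin d) => (p i).coeff k).rank :=
        hfactor ▸ Matrix.rank_mul_le_left _ _
    _ ≤ d := (Matrix.rank_le_card_width _).trans_eq (Fintype.card_fin d)

theorem one_le_sq_intCast_sub {a b : ℤ} (h : a ≠ b) : (1 : ℝ) ≤ ((a : ℝ) - b) ^ 2 := by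
  have : (1 : ℤ) ≤ (a - b) ^ 2 :=
    (one_le_sq_iff_one_le_abs _).2 (Int.one_le_abs (sub_ne_zero.2 h))
  exact_mod_cast this

section SignPoly

/-- Negative at the points of `s` and positive at the points at distance at least `1` from `s`. -/
noncomputable def signPoly (s : Finset ℝ) : ℝ[X] :=
  -∏ u ∈ s, ((X - C u) ^ 2 - C 2⁻¹)

variable {s : Finset ℝ} {t : ℝ}

theorem natDegree_signPoly_le (s : Finset ℝ) : (signPoly s).natDegree ≤ 2 * s.card := by
  rw [signPoly, natDegree_neg]
  calc _ ≤ ∑ u ∈ s, ((X - C u) ^ 2 - C (2⁻¹ : ℝ)).natDegree := natDegree_prod_le _ _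
    _ = ∑ _u ∈ s, 2 := Finset.sum_congr rfl fun u _ => by
      rw [natDegree_sub_C, natDegree_pow, natDegree_X_sub_C]
    _ = 2 * s.card := by rw [Finset.sum_const, smul_eq_mul, mul_comm]

theorem eval_signPoly (s : Finset ℝ) (t : ℝ) :
    (signPoly s).eval t = -∏ u ∈ s, ((t - u) ^ 2 - 2⁻¹) := by
  simp [signPoly, eval_prod]

theorem prod_sq_sub_half_pos (hs : ∀ u ∈ s, u ≠ t → 1 ≤ (t - u) ^ 2) :
    0 < ∏ u ∈ s.erase t, ((t - u) ^ 2 - 2⁻¹) :=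
  Finset.prod_pos fun u hu => by
    have := hs u (Finset.mem_of_mem_erase hu) (Finset.ne_of_mem_erase hu)
    linarith

theorem eval_signPoly_pos (hs : ∀ u ∈ s, u ≠ t → 1 ≤ (t - u) ^ 2) (ht : t ∈ s) :
    0 < (signPoly s).eval t := by
  rw [eval_signPoly, ← Finset.mul_prod_erase s _ ht, sub_self]
  have := prod_sq_sub_half_pos hs
  nlinarith

theorem eval_signPoly_neg (hs : ∀ u ∈ s, u ≠ t → 1 ≤ (t - u) ^ 2) (ht : t ∉ s) :
    (signPoly s).eval t < 0 := by
  rw [eval_signPoly, ← Finset.erase_eq_of_notMem ht]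
  exact neg_neg_of_pos (prod_sq_sub_half_pos hs)

end SignPoly

theorem sign_rank_le_of_bounded_degree (n c : ℕ) (G : SimpleGraph (Fin n))
    [DecidableRel G.Adj] (hdeg : ∀ v, G.degree v ≤ c) :
    ∃ M : Matrix (Fin n) (Fin n) ℝ, M.rank ≤ 2 * c + 1 ∧
      ∀ i j : Fin n, (0 < M i j ↔ G.Adj i j) ∧ (¬ G.Adj i j → M i j < 0) := by
  let pt : Fin n → ℝ := fun v => (((v : ℕ) : ℤ) : ℝ)
  have pt_inj : pt.Injective := fun u v h => Fin.ext (by simpa [pt] using h)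
  let s : Fin n → Finset ℝ := fun i => (G.neighborFinset i).image pt
  have hdegree : ∀ i, (signPoly (s i)).natDegree < 2 * c + 1 := fun i => by
    have := (natDegree_signPoly_le (s i)).trans
      (Nat.mul_le_mul_left 2 (Finset.card_image_le.trans_eq (G.card_neighborFinset_eq_degree i)))
    have := hdeg i
    omega
  have hspaced : ∀ i j, ∀ u ∈ s i, u ≠ pt j → 1 ≤ (pt j - u) ^ 2 := by
    intro i j u hu hne
    obtain ⟨v, -, rfl⟩ := Finset.mem_image.1 hu
    exact one_le_sq_intCast_sub fun h => hne (congrArg pt (Fin.ext (by exact_mod_cast h.symm)))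
  have hmem : ∀ i j, pt j ∈ s i ↔ G.Adj i j := fun i j => by
    simp [s, pt_inj.eq_iff]
  refine ⟨Matrix.of fun i j => (signPoly (s i)).eval (pt j),
    Matrix.rank_of_eval_le _ _ hdegree, fun i j => ?_⟩
  have hneg : ¬ G.Adj i j → (signPoly (s i)).eval (pt j) < 0 := fun h =>
    eval_signPoly_neg (hspaced i j) (mt (hmem i j).1 h)
  refine ⟨⟨fun hpos => by_contra fun h => (hneg h).not_gt hpos,
    fun h => eval_signPoly_pos (hspaced i j) ((hmem i j).2 h)⟩, hneg⟩
end

section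
/- Let A ∈ {0,1}^{n×n} be a matrix such that every row consists of at most b maximal contiguous blocks of ones. Then there exist X, Y ∈ ℝ^{n×(2b+1)} such that A = σ(XYᵀ), where σ(t) = max(0, min(1, t)) is applied entrywise. In particular, a block-diagonal 0/1 matrix (one contiguous block of ones per row) admits such a factorization with dimension 3. -/
/-!
Fix a row and let `S ⊆ ℤ` be the set of its columns carrying a one. Call `m` a boundary point
of `S` when exactly one of `m - 1`, `m` lies in `S`; every block `[l, r]` contributes at most
the two boundary points `l` and `r + 1`, so there are at most `2b` of them. The polynomial
`p = -∏ (2x + 1 - 2m)`, over the boundary points `m`, has degree at most `2b`, each factor has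
absolute value at least `1` at an integer, and its sign at `j` is `(-1) ^ (1 + #{m > j})`.
Walking down from above `S`, membership flips exactly at the boundary points, so `#{m > j}` is
odd iff `j ∈ S`: thus `p j ≥ 1` on `S` and `p j ≤ -1` off it. Taking the coefficients of `p`
as row of `X` and the powers `j ^ e` as row of `Y` gives `(X * Yᵀ) i j = p j`.
-/

open Matrix

noncomputable def sigma (t : ℝ) : ℝ := max 0 (min 1 t)

open Finset Polynomial

lemma sigma_of_one_le {t : ℝ} (ht : 1 ≤ t) : sigma t = 1 := by
  rw [sigma, min_eq_left ht, max_eq_right zero_le_one]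

lemma sigma_of_nonpos {t : ℝ} (ht : t ≤ 0) : sigma t = 0 := by
  rw [sigma, min_eq_right (ht.trans zero_le_one), max_eq_left ht]

theorem of_coeff_mul_of_pow_transpose {R ι κ : Type*} [CommSemiring R] {d : ℕ} (p : ι → R[X])
    (hp : ∀ i, (p i).natDegree < d) (x : κ → R) :
    (of fun i (e : Fin d) => (p i).coeff e) * (of fun j (e : Fin d) => x j ^ (e : ℕ))ᵀ =
      of fun i j => (p i).eval (x j) := by
  ext i j
  simp [mul_apply, eval_eq_sum_range' (hp i),
    Fin.sum_univ_eq_sum_range (fun e => (p i).coeff e * x j ^ e)]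

lemma one_le_neg_one_pow_card_mul_prod {ι R : Type*} [CommRing R] [LinearOrder R]
    [IsStrictOrderedRing R] {s : Finset ι} {f : ι → R} (hf : ∀ i ∈ s, f i ≤ -1) :
    1 ≤ (-1) ^ #s * ∏ i ∈ s, f i := by
  rw [← prod_neg]
  exact one_le_prod fun i hi => by linarith [hf i hi]

def boundaryPoints (S : Finset ℤ) : Finset ℤ :=
  {m ∈ S ∪ S.image (· + 1) | m ∈ S ↔ m - 1 ∉ S}

lemma mem_boundaryPoints {S : Finset ℤ} {m : ℤ} :
    m ∈ boundaryPoints S ↔ (m ∈ S ↔ m - 1 ∉ S) := by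
  refine ⟨fun h => (mem_filter.1 h).2, fun h => mem_filter.2 ⟨?_, h⟩⟩
  by_cases hm : m ∈ S
  · exact mem_union_left _ hm
  · exact mem_union_right _ (mem_image.2 ⟨m - 1, by tauto, by ring⟩)

lemma odd_card_boundaryPoints_gt_iff (S : Finset ℤ) (j : ℤ) :
    Odd #{m ∈ boundaryPoints S | j < m} ↔ j ∈ S := by
  obtain ⟨N, hN⟩ := S.exists_le
  have above : ∀ j, N < j → (Odd #{m ∈ boundaryPoints S | j < m} ↔ j ∈ S) := by
    intro j hj
    have hS : ∀ m, N < m → m ∉ S := fun m hm hmS => (hN m hmS).not_gt hm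
    have hempty : {m ∈ boundaryPoints S | j < m} = ∅ :=
      filter_false_of_mem fun m hm hjm => by
        simpa [hS m (by omega), hS (m - 1) (by omega)] using mem_boundaryPoints.1 hm
    simp [hempty, hS j hj]
  rcases lt_or_ge (N + 1) j with hj | hj
  · exact above j (by omega)
  induction j, hj using Int.leInductionDown with
  | base => exact above _ (by omega)
  | pred n _ ih =>
    have hsplit : {m ∈ boundaryPoints S | n - 1 < m} =
        if n ∈ boundaryPoints S then insert n {m ∈ boundaryPoints S | n < m}
        else {m ∈ boundaryPoints S | n < m} := by
      ext m
      split_ifs <;> simp only [mem_filter, mem_insert] <;> grind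
    rw [hsplit]
    split_ifs with h
    · rw [card_insert_of_notMem (by simp), Nat.odd_add_one]
      have := mem_boundaryPoints.1 h
      tauto
    · have := mem_boundaryPoints.not.1 h
      tauto

lemma card_boundaryPoints_biUnion_Icc_le {ι : Type*} [Fintype ι] (l r : ι → ℤ) :
    #(boundaryPoints (univ.biUnion fun s => Icc (l s) (r s))) ≤ 2 * Fintype.card ι := by
  have hsub : boundaryPoints (univ.biUnion fun s => Icc (l s) (r s)) ⊆
      univ.image l ∪ univ.image (r · + 1) := by
    intro m hm
    simp only [mem_boundaryPoints, mem_biUnion, mem_univ, true_and, mem_Icc] at hm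
    simp only [mem_union, mem_image, mem_univ, true_and]
    by_cases hmS : ∃ s, l s ≤ m ∧ m ≤ r s
    · obtain ⟨s, hs⟩ := hmS
      exact Or.inl ⟨s, by grind⟩
    · obtain ⟨s, hs⟩ := not_not.1 (hm.not.1 hmS)
      exact Or.inr ⟨s, by grind⟩
  calc _ ≤ #(univ.image l ∪ univ.image (r · + 1)) := card_le_card hsub
    _ ≤ #(univ.image l) + #(univ.image (r · + 1)) := card_union_le _ _
    _ ≤ Fintype.card ι + Fintype.card ι := add_le_add card_image_le card_image_le
    _ = 2 * Fintype.card ι := by ring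

noncomputable def separatingPoly (S : Finset ℤ) : ℝ[X] :=
  -∏ m ∈ boundaryPoints S, (C 2 * X + C (1 - 2 * m : ℝ))

lemma natDegree_separatingPoly_le (S : Finset ℤ) :
    (separatingPoly S).natDegree ≤ #(boundaryPoints S) := by
  rw [separatingPoly, natDegree_neg]
  refine (natDegree_prod_le _ _).trans ((sum_le_sum fun _ _ => natDegree_linear_le).trans ?_)
  rw [card_eq_sum_ones]

lemma one_le_neg_one_pow_mul_eval_separatingPoly (S : Finset ℤ) (j : ℤ) :
    1 ≤ (-1) ^ (#{m ∈ boundaryPoints S | j < m} + 1) * (separatingPoly S).eval (j : ℝ) := by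
  set f : ℤ → ℝ := fun m => 2 * j + (1 - 2 * m)
  have hle : 1 ≤ ∏ m ∈ boundaryPoints S with ¬ j < m, f m :=
    one_le_prod fun m hm => by
      have : m ≤ j := not_lt.1 (mem_filter.1 hm).2
      have : (m : ℝ) ≤ j := by exact_mod_cast this
      linarith
  have hgt := one_le_neg_one_pow_card_mul_prod (s := {m ∈ boundaryPoints S | j < m}) (f := f)
    fun m hm => by
      have : j + 1 ≤ m := (mem_filter.1 hm).2
      have : (j : ℝ) + 1 ≤ m := by exact_mod_cast this
      linarith
  have heval : (separatingPoly S).eval (j : ℝ) =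
      -((∏ m ∈ boundaryPoints S with j < m, f m) * ∏ m ∈ boundaryPoints S with ¬ j < m, f m) := by
    rw [prod_filter_mul_prod_filter_not]
    simp [separatingPoly, eval_prod, f]
  rw [heval, pow_succ]
  nlinarith

lemma one_le_eval_separatingPoly {S : Finset ℤ} {j : ℤ} (hj : j ∈ S) :
    1 ≤ (separatingPoly S).eval (j : ℝ) := by
  have h := one_le_neg_one_pow_mul_eval_separatingPoly S j
  rwa [((odd_card_boundaryPoints_gt_iff S j).2 hj).add_one.neg_one_pow, one_mul] at h

lemma eval_separatingPoly_le_neg_one {S : Finset ℤ} {j : ℤ} (hj : j ∉ S) :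
    (separatingPoly S).eval (j : ℝ) ≤ -1 := by
  have h := one_le_neg_one_pow_mul_eval_separatingPoly S j
  rw [(Nat.not_odd_iff_even.1 ((odd_card_boundaryPoints_gt_iff S j).not.2 hj)).add_one.neg_one_pow]
    at h
  linarith

theorem exact_factorization_of_block_sparse_rows (n b : ℕ)
    (A : Matrix (Fin n) (Fin n) ℝ)
    (hbin : ∀ i j, A i j = 0 ∨ A i j = 1)
    (hblocks : ∀ i : Fin n, ∃ k ≤ b, ∃ l r : Fin k → Fin n,
      (∀ s, l s ≤ r s) ∧
      (∀ j : Fin n, A i j = 1 ↔ ∃ s, l s ≤ j ∧ j ≤ r s)) :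
    ∃ X Y : Matrix (Fin n) (Fin (2 * b + 1)) ℝ, A = (X * Yᵀ).map sigma := by
  choose k hk l r _ hA using hblocks
  set S : Fin n → Finset ℤ := fun i => univ.biUnion fun s => Icc (l i s : ℤ) (r i s)
  have hdeg : ∀ i, (separatingPoly (S i)).natDegree < 2 * b + 1 := fun i => by
    have := (natDegree_separatingPoly_le (S i)).trans (card_boundaryPoints_biUnion_Icc_le _ _)
    rw [Fintype.card_fin] at this
    linarith [hk i]
  refine ⟨of fun i e => (separatingPoly (S i)).coeff e, of fun j e => ((j : ℤ) : ℝ) ^ (e : ℕ), ?_⟩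
  rw [of_coeff_mul_of_pow_transpose _ hdeg]
  ext i j
  have hrow : A i j = 1 ↔ (j : ℤ) ∈ S i := by
    simp only [hA, S, mem_biUnion, mem_univ, true_and, mem_Icc, Fin.le_def, Nat.cast_le]
  rcases hbin i j with h | h
  · rw [h, map_apply, of_apply, sigma_of_nonpos]
    exact (eval_separatingPoly_le_neg_one (hrow.not.1 (by simp [h]))).trans (by norm_num)
  · rw [h, map_apply, of_apply, sigma_of_one_le (one_le_eval_separatingPoly (hrow.1 h))]
end
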